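/- arXiv:math-ph/0210027 — 5 statements merged into one kernel-verified Lean document; each statement's English description precedes it below -/
import Mathlib

section
/- Let A and B be n×n complex matrices and let p, r be positive integers. Then the r-th derivative of λ ↦ (A+λB)^{p+r} (as a matrix-valued function of the real variable λ) equals r! times the sum over all (r+1)-tuples (i₁, …, i_{r+1}) of non-negative integers with i₁ + ⋯ + i_{r+1} = p of the matrix products (A+λB)^{i₁} B (A+λB)^{i₂} B ⋯ B (A+λB)^{i_{r+1}}. -/
open Matrix Finset

attribute [local instance] Matrix.frobeniusNormedAddCommGroup Matrix.frobeniusNormedSpace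
  Matrix.frobeniusNormedRing Matrix.frobeniusNormedAlgebra

/-- Decompose a sum over `(k+1)`-tuples summing to `m` as a double sum. -/
lemma sum_antidiagonalTuple_succ {M : Type*} [AddCommMonoid M] {k m : ℕ}
    (g : (Fin (k + 1) → ℕ) → M) :
    ∑ i ∈ Finset.Nat.antidiagonalTuple (k + 1) m, g i
      = ∑ ab ∈ Finset.HasAntidiagonal.antidiagonal m,
          ∑ x ∈ Finset.Nat.antidiagonalTuple k ab.2, g (Fin.cons ab.1 x) := by
  rw [Finset.sum_sigma']
  refine Finset.sum_nbij' (i := fun y => ⟨(y 0, ∑ j, y (Fin.succ j)), Fin.tail y⟩)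
    (j := fun x => Fin.cons x.1.1 x.2) ?_ ?_ ?_ ?_ ?_
  · intro y hy
    rw [Finset.Nat.mem_antidiagonalTuple] at hy
    refine Finset.mem_sigma.mpr ⟨Finset.HasAntidiagonal.mem_antidiagonal.mpr ?_,
      Finset.Nat.mem_antidiagonalTuple.mpr rfl⟩
    rw [← hy, Fin.sum_univ_succ]
  · intro x hx
    rw [Finset.mem_sigma] at hx
    rw [Finset.Nat.mem_antidiagonalTuple, Fin.sum_univ_succ]
    simp only [Fin.cons_zero, Fin.cons_succ]
    rw [Finset.Nat.mem_antidiagonalTuple.mp hx.2, Finset.HasAntidiagonal.mem_antidiagonal.mp hx.1]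
  · intro y _; exact Fin.cons_self_tail y
  · intro x hx
    rw [Finset.mem_sigma] at hx
    refine Sigma.ext ?_ (heq_of_eq ?_)
    · simp only [Fin.cons_zero, Fin.cons_succ]
      exact Prod.ext rfl (Finset.Nat.mem_antidiagonalTuple.mp hx.2)
    · simp [Fin.tail_cons]
  · intro y _; simp [Fin.cons_self_tail]

variable {n : ℕ}

/-- The sum of interleaved products. -/
noncomputable def S (A B : Matrix (Fin n) (Fin n) ℂ) (m k : ℕ) (t : ℝ) :
    Matrix (Fin n) (Fin n) ℂ :=
  ∑ i ∈ Finset.Nat.antidiagonalTuple (k + 1) m,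
    (A + t • B) ^ (i 0) * (List.ofFn fun j : Fin k => B * (A + t • B) ^ (i j.succ)).prod

lemma S_zero (A B : Matrix (Fin n) (Fin n) ℂ) (m : ℕ) (t : ℝ) :
    S A B m 0 t = (A + t • B) ^ m := by
  simp [S]

lemma S_succ (A B : Matrix (Fin n) (Fin n) ℂ) (m k : ℕ) (t : ℝ) :
    S A B m (k + 1) t
      = ∑ ab ∈ Finset.HasAntidiagonal.antidiagonal m, (A + t • B) ^ ab.1 * B * S A B ab.2 k t := by
  rw [S, sum_antidiagonalTuple_succ]
  refine Finset.sum_congr rfl fun ab _ => ?_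
  rw [S, Finset.mul_sum]
  refine Finset.sum_congr rfl fun x _ => ?_
  simp only [Fin.cons_zero, Fin.cons_succ, List.ofFn_succ, List.prod_cons, Fin.succ_zero_eq_one]
  simp [mul_assoc]

/-- Reassociation of a triple antidiagonal sum. -/
lemma sum_antidiagonal_assoc {M : Type*} [AddCommMonoid M] (F : ℕ → ℕ → ℕ → M) (m : ℕ) :
    ∑ ab ∈ Finset.HasAntidiagonal.antidiagonal m, ∑ cd ∈ Finset.HasAntidiagonal.antidiagonal ab.1, F cd.1 cd.2 ab.2
      = ∑ ab ∈ Finset.HasAntidiagonal.antidiagonal m, ∑ cd ∈ Finset.HasAntidiagonal.antidiagonal ab.2, F ab.1 cd.1 cd.2 := by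
  rw [Finset.sum_sigma', Finset.sum_sigma']
  refine Finset.sum_nbij' (i := fun x => ⟨(x.2.1, x.2.2 + x.1.2), (x.2.2, x.1.2)⟩)
    (j := fun y => ⟨(y.1.1 + y.2.1, y.2.2), (y.1.1, y.2.1)⟩) ?_ ?_ ?_ ?_ ?_
  · rintro ⟨⟨a, b⟩, ⟨c, d⟩⟩ hx
    simp only [Finset.mem_sigma, Finset.HasAntidiagonal.mem_antidiagonal] at hx ⊢
    exact ⟨by omega, trivial⟩
  · rintro ⟨⟨a, b⟩, ⟨c, d⟩⟩ hy
    simp only [Finset.mem_sigma, Finset.HasAntidiagonal.mem_antidiagonal] at hy ⊢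
    exact ⟨by omega, trivial⟩
  · rintro ⟨⟨a, b⟩, ⟨c, d⟩⟩ hx
    simp only [Finset.mem_sigma, Finset.HasAntidiagonal.mem_antidiagonal] at hx
    refine Sigma.ext (Prod.ext ?_ ?_) (heq_of_eq (Prod.ext ?_ ?_)) <;> simp <;> omega
  · rintro ⟨⟨a, b⟩, ⟨c, d⟩⟩ hy
    simp only [Finset.mem_sigma, Finset.HasAntidiagonal.mem_antidiagonal] at hy
    refine Sigma.ext (Prod.ext ?_ ?_) (heq_of_eq (Prod.ext ?_ ?_)) <;> simp <;> omega
  · intro x _; rfl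

/-- The claimed derivative of `S`. -/
noncomputable def E (A B : Matrix (Fin n) (Fin n) ℂ) : ℕ → ℕ → ℝ → Matrix (Fin n) (Fin n) ℂ
  | 0, _, _ => 0
  | m + 1, k, l => (k + 1) • S A B m (k + 1) l

lemma hasDerivAt_base (A B : Matrix (Fin n) (Fin n) ℂ) (l : ℝ) :
    HasDerivAt (fun t : ℝ => A + t • B) B l := by
  have h := ((hasDerivAt_id l).smul_const B).const_add A
  simp only [id, one_smul] at h
  exact h

lemma hasDerivAt_pow_base (A B : Matrix (Fin n) (Fin n) ℂ) (m : ℕ) (l : ℝ) :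
    HasDerivAt (fun t : ℝ => (A + t • B) ^ m) (E A B m 0 l) l := by
  induction m with
  | zero => simp only [pow_zero, E]; exact hasDerivAt_const l (1 : Matrix (Fin n) (Fin n) ℂ)
  | succ m ih =>
    have h := (hasDerivAt_base A B l).fun_mul ih
    simp only [← pow_succ'] at h
    refine h.congr_deriv (Eq.symm ?_)
    cases m with
    | zero =>
      simp [E, S_succ, S_zero]
    | succ m =>
      simp only [E, zero_add, one_smul]
      rw [S_succ]
      simp only [S_zero]
      rw [Finset.Nat.sum_antidiagonal_succ, pow_zero, one_mul]
      congr 1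
      rw [S_succ, Finset.mul_sum]
      refine Finset.sum_congr rfl fun ab _ => ?_
      simp only [S_zero]
      simp [pow_succ', mul_assoc]

lemma hasDerivAt_S (A B : Matrix (Fin n) (Fin n) ℂ) :
    ∀ (k m : ℕ) (l : ℝ), HasDerivAt (fun t => S A B m k t) (E A B m k l) l := by
  intro k
  induction k with
  | zero =>
    intro m l
    simp only [S_zero]
    exact hasDerivAt_pow_base A B m l
  | succ k ih =>
    intro m l
    have hfun : (fun t => S A B m (k + 1) t)
        = fun t => ∑ ab ∈ Finset.HasAntidiagonal.antidiagonal m, (A + t • B) ^ ab.1 * B * S A B ab.2 k t :=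
      funext fun t => S_succ A B m k t
    rw [hfun]
    have hterm : ∀ ab ∈ Finset.HasAntidiagonal.antidiagonal m,
        HasDerivAt (fun t => (A + t • B) ^ ab.1 * B * S A B ab.2 k t)
          (E A B ab.1 0 l * B * S A B ab.2 k l + (A + l • B) ^ ab.1 * B * E A B ab.2 k l) l := by
      intro ab _
      exact ((hasDerivAt_pow_base A B ab.1 l).mul_const B).mul (ih ab.2 l)
    have hsum := HasDerivAt.fun_sum hterm
    refine hsum.congr_deriv (Eq.symm ?_)
    cases m with
    | zero =>
      simp [E, Finset.Nat.antidiagonal_zero]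
    | succ m =>
      rw [Finset.sum_add_distrib, E]
      have part1 : ∑ ab ∈ Finset.HasAntidiagonal.antidiagonal (m + 1), E A B ab.1 0 l * B * S A B ab.2 k l
          = S A B m (k + 2) l := by
        rw [Finset.Nat.sum_antidiagonal_succ]
        simp only [E, Matrix.zero_mul, zero_add, zero_add, one_smul]
        have : ∀ ab : ℕ × ℕ, S A B ab.1 1 l * B * S A B ab.2 k l
            = ∑ cd ∈ Finset.HasAntidiagonal.antidiagonal ab.1,
                (A + l • B) ^ cd.1 * B * (A + l • B) ^ cd.2 * B * S A B ab.2 k l := by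
          intro ab
          rw [S_succ]
          simp only [S_zero]
          rw [Finset.sum_mul, Finset.sum_mul]
        simp only [this]
        rw [sum_antidiagonal_assoc (fun c d b =>
          (A + l • B) ^ c * B * (A + l • B) ^ d * B * S A B b k l) m]
        rw [S_succ]
        refine Finset.sum_congr rfl fun ab _ => ?_
        rw [S_succ, Finset.mul_sum]
        refine Finset.sum_congr rfl fun cd _ => ?_
        simp [mul_assoc]
      have part2 : ∑ ab ∈ Finset.HasAntidiagonal.antidiagonal (m + 1),
            (A + l • B) ^ ab.1 * B * E A B ab.2 k l
          = (k + 1) • S A B m (k + 2) l := by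
        rw [Finset.Nat.sum_antidiagonal_succ']
        simp only [E, Matrix.mul_zero, zero_add]
        rw [S_succ, Finset.smul_sum]
        refine Finset.sum_congr rfl fun ab _ => ?_
        rw [mul_smul_comm]
      rw [part1, part2, succ_nsmul]
      abel

lemma iteratedDeriv_S (A B : Matrix (Fin n) (Fin n) ℂ) (r : ℕ) :
    ∀ (p : ℕ) (l : ℝ),
      iteratedDeriv r (fun t : ℝ => (A + t • B) ^ (p + r)) l
        = r.factorial • S A B p r l := by
  induction r with
  | zero =>
    intro p l
    simp [iteratedDeriv_zero, S_zero]
  | succ r ih =>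
    intro p l
    rw [iteratedDeriv_succ]
    have hfun : iteratedDeriv r (fun t : ℝ => (A + t • B) ^ (p + (r + 1)))
        = fun l' => ((r.factorial : ℕ) : ℂ) • S A B (p + 1) r l' := by
      funext l'
      have h := ih (p + 1) l'
      rw [show p + 1 + r = p + (r + 1) by omega] at h
      rw [h, Nat.cast_smul_eq_nsmul]
    rw [hfun]
    have hd : HasDerivAt (fun l' => ((r.factorial : ℕ) : ℂ) • S A B (p + 1) r l')
        (((r.factorial : ℕ) : ℂ) • E A B (p + 1) r l) l :=
      (hasDerivAt_S A B r (p + 1) l).fun_const_smul _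
    rw [hd.deriv, E, Nat.cast_smul_eq_nsmul, smul_smul, Nat.factorial_succ, mul_comm]

theorem iteratedDeriv_pow_eq_sum {n : ℕ} (A B : Matrix (Fin n) (Fin n) ℂ)
    (p r : ℕ) (hp : 0 < p) (hr : 0 < r) (l : ℝ) :
    iteratedDeriv r (fun t : ℝ => (A + t • B) ^ (p + r)) l =
      ((Nat.factorial r : ℕ) : ℂ) • ∑ i ∈ Finset.Nat.antidiagonalTuple (r + 1) p,
        (A + l • B) ^ (i 0) *
          (List.ofFn fun j : Fin r => B * (A + l • B) ^ (i j.succ)).prod := by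
  rw [iteratedDeriv_S A B r p l, ← Nat.cast_smul_eq_nsmul ℂ]
  rfl
end

section
/- Let a and b be Hermitian n×n complex matrices with a positive definite, and let p, r be positive integers. Then for λ in a neighborhood of 0 (where a+λb is invertible), the r-th derivative of λ ↦ (a+λb)^{−p} equals (−1)^r r! times the sum over all (r+1)-tuples (i₁, …, i_{r+1}) of integers with 1 ≤ i_j ≤ p and i₁ + ⋯ + i_{r+1} = p + r of the matrix products (a+λb)^{−i₁} b (a+λb)^{−i₂} b ⋯ b (a+λb)^{−i_{r+1}}. -/
open Matrix
open scoped ComplexOrder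

attribute [local instance] Matrix.frobeniusNormedAddCommGroup Matrix.frobeniusNormedSpace
attribute [local instance] Matrix.frobeniusNormedRing Matrix.frobeniusNormedAlgebra

namespace IterDerivAux

/-! ### Combinatorial toolkit: splitting and merging adjacent entries of tuples -/

def splice : ∀ {s : ℕ}, (Fin (s+1) → ℕ) → ℕ → ℕ → Fin (s+2) → ℕ
  | _, m, 0, k => Fin.cons k (Fin.cons (m 0 - k) (Fin.tail m))
  | 0, m, _+1, k => Fin.cons k (Fin.cons (m 0 - k) (Fin.tail m))
  | _+1, m, j+1, k => Fin.cons (m 0) (splice (Fin.tail m) j k)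

def merge : ∀ {s : ℕ}, (Fin (s+2) → ℕ) → ℕ → Fin (s+1) → ℕ
  | _, m, 0 => Fin.cons (m 0 + m 1) (Fin.tail (Fin.tail m))
  | 0, m, _+1 => Fin.cons (m 0 + m 1) (Fin.tail (Fin.tail m))
  | _+1, m, j+1 => Fin.cons (m 0) (merge (Fin.tail m) j)

lemma splice_zero {s : ℕ} (m : Fin (s+1) → ℕ) (k : ℕ) :
    splice m 0 k = Fin.cons k (Fin.cons (m 0 - k) (Fin.tail m)) := by
  revert m; cases s <;> (intro m; rfl)

lemma splice_succ {s : ℕ} (m : Fin (s+2) → ℕ) (j : ℕ) (k : ℕ) :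
    splice m (j+1) k = Fin.cons (m 0) (splice (Fin.tail m) j k) := rfl

lemma merge_zero {s : ℕ} (m : Fin (s+2) → ℕ) :
    merge m 0 = Fin.cons (m 0 + m 1) (Fin.tail (Fin.tail m)) := by
  revert m; cases s <;> (intro m; rfl)

lemma merge_succ {s : ℕ} (m : Fin (s+3) → ℕ) (j : ℕ) :
    merge m (j+1) = Fin.cons (m 0) (merge (Fin.tail m) j) := rfl

lemma cons_one {s : ℕ} (x : ℕ) (f : Fin (s+1) → ℕ) :
    (Fin.cons x f : Fin (s+2) → ℕ) 1 = f 0 := rfl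

lemma tail_sum {s : ℕ} (m : Fin (s+1) → ℕ) :
    ∑ t, m t = m 0 + ∑ t, Fin.tail m t := by
  rw [Fin.sum_univ_succ]; rfl

lemma sum_splice_zero {s : ℕ} (m : Fin (s+1) → ℕ) (k : ℕ) (hk : k ≤ m 0) :
    ∑ t, splice m 0 k t = ∑ t, m t := by
  rw [splice_zero, Fin.sum_cons, Fin.sum_cons, tail_sum m]; omega

lemma merge_splice_zero {s : ℕ} (m : Fin (s+1) → ℕ) (k : ℕ) (hk : k ≤ m 0) :
    merge (splice m 0 k) 0 = m := by
  rw [splice_zero, merge_zero]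
  simp only [Fin.cons_zero, cons_one, Fin.tail_cons]
  rw [show k + (m 0 - k) = m 0 from by omega, Fin.cons_self_tail]

lemma splice_merge_zero {s : ℕ} (m : Fin (s+2) → ℕ) :
    splice (merge m 0) 0 (m 0) = m := by
  rw [merge_zero, splice_zero]
  simp only [Fin.cons_zero, Fin.tail_cons]
  rw [show m 0 + m 1 - m 0 = m 1 from by omega,
    show m 1 = Fin.tail m 0 from rfl, Fin.cons_self_tail, Fin.cons_self_tail]

lemma merge_apply_zero {s : ℕ} (m : Fin (s+2) → ℕ) :
    merge m 0 0 = m 0 + m 1 := by rw [merge_zero, Fin.cons_zero]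

lemma splice_apply_zero {s : ℕ} (m : Fin (s+1) → ℕ) (k : ℕ) :
    splice m 0 k 0 = k := by rw [splice_zero, Fin.cons_zero]

lemma sum_merge_zero {s : ℕ} (m : Fin (s+2) → ℕ) :
    ∑ t, merge m 0 t = ∑ t, m t := by
  rw [merge_zero, Fin.sum_cons, tail_sum m, tail_sum (Fin.tail m)]
  rw [show Fin.tail m 0 = m 1 from rfl]
  omega

lemma sum_splice : ∀ {s : ℕ} (m : Fin (s+1) → ℕ) (j : Fin (s+1)) (k : ℕ), k ≤ m j →
    ∑ t, splice m j.val k t = ∑ t, m t := by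
  intro s
  induction s with
  | zero =>
    intro m j k hk
    cases j using Fin.cases with
    | zero => exact sum_splice_zero m k hk
    | succ j' => exact j'.elim0
  | succ s ih =>
    intro m j k hk
    cases j using Fin.cases with
    | zero => exact sum_splice_zero m k hk
    | succ j' =>
      rw [Fin.val_succ, splice_succ, Fin.sum_cons, ih (Fin.tail m) j' k hk, tail_sum m]

lemma merge_splice : ∀ {s : ℕ} (m : Fin (s+1) → ℕ) (j : Fin (s+1)) (k : ℕ), k ≤ m j →
    merge (splice m j.val k) j.val = m := by
  intro s
  induction s with
  | zero =>
    intro m j k hk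
    cases j using Fin.cases with
    | zero => exact merge_splice_zero m k hk
    | succ j' => exact j'.elim0
  | succ s ih =>
    intro m j k hk
    cases j using Fin.cases with
    | zero => exact merge_splice_zero m k hk
    | succ j' =>
      rw [Fin.val_succ, splice_succ, merge_succ, Fin.cons_zero, Fin.tail_cons,
        ih (Fin.tail m) j' k hk, Fin.cons_self_tail]

lemma splice_apply : ∀ {s : ℕ} (m : Fin (s+1) → ℕ) (j : Fin (s+1)) (k : ℕ),
    splice m j.val k j.castSucc = k := by
  intro s
  induction s with
  | zero =>
    intro m j k
    cases j using Fin.cases with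
    | zero => exact splice_apply_zero m k
    | succ j' => exact j'.elim0
  | succ s ih =>
    intro m j k
    cases j using Fin.cases with
    | zero => exact splice_apply_zero m k
    | succ j' =>
      rw [Fin.val_succ, splice_succ, ← Fin.succ_castSucc, Fin.cons_succ,
        ih (Fin.tail m) j' k]

lemma splice_merge : ∀ {s : ℕ} (m : Fin (s+2) → ℕ) (j : Fin (s+1)),
    splice (merge m j.val) j.val (m j.castSucc) = m := by
  intro s
  induction s with
  | zero =>
    intro m j
    cases j using Fin.cases with
    | zero => exact splice_merge_zero m
    | succ j' => exact j'.elim0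
  | succ s ih =>
    intro m j
    cases j using Fin.cases with
    | zero => exact splice_merge_zero m
    | succ j' =>
      rw [Fin.val_succ, merge_succ, splice_succ, Fin.cons_zero, Fin.tail_cons,
        ← Fin.succ_castSucc, show m j'.castSucc.succ = Fin.tail m j'.castSucc from rfl,
        ih (Fin.tail m) j', Fin.cons_self_tail]

lemma merge_apply : ∀ {s : ℕ} (m : Fin (s+2) → ℕ) (j : Fin (s+1)),
    merge m j.val j = m j.castSucc + m j.succ := by
  intro s
  induction s with
  | zero =>
    intro m j
    cases j using Fin.cases with
    | zero => exact merge_apply_zero m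
    | succ j' => exact j'.elim0
  | succ s ih =>
    intro m j
    cases j using Fin.cases with
    | zero => exact merge_apply_zero m
    | succ j' =>
      rw [Fin.val_succ, merge_succ, Fin.cons_succ, ih (Fin.tail m) j',
        ← Fin.succ_castSucc]
      rfl

lemma sum_merge : ∀ {s : ℕ} (m : Fin (s+2) → ℕ) (j : Fin (s+1)),
    ∑ t, merge m j.val t = ∑ t, m t := by
  intro s
  induction s with
  | zero =>
    intro m j
    cases j using Fin.cases with
    | zero => exact sum_merge_zero m
    | succ j' => exact j'.elim0
  | succ s ih =>
    intro m j
    cases j using Fin.cases with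
    | zero => exact sum_merge_zero m
    | succ j' =>
      rw [Fin.val_succ, merge_succ, Fin.sum_cons, ih (Fin.tail m) j', tail_sum m]

open Finset in
lemma triple_sum {s N : ℕ} {M : Type*} [AddCommMonoid M] (f : (Fin (s+2) → ℕ) → M) :
    ∑ m ∈ Finset.Nat.antidiagonalTuple (s+1) N, ∑ j : Fin (s+1),
        ∑ k ∈ Finset.range (m j + 1), f (splice m j.val k)
      = ∑ m' ∈ Finset.Nat.antidiagonalTuple (s+2) N, ∑ _j : Fin (s+1), f m' := by
  classical
  set A := Finset.Nat.antidiagonalTuple (s+1) N with hA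
  set B := Finset.Nat.antidiagonalTuple (s+2) N with hB
  have h0 := Finset.sum_product' (s := A) (t := (univ : Finset (Fin (s+1))))
    (f := fun m j => ∑ k ∈ Finset.range (m j + 1), f (splice m j.val k))
  have h1 := Finset.sum_sigma' (s := A ×ˢ (univ : Finset (Fin (s+1))))
    (t := fun q => Finset.range (q.1 q.2 + 1))
    (f := fun q k => f (splice q.1 q.2.val k))
  have h2 := Finset.sum_product' (s := B) (t := (univ : Finset (Fin (s+1))))
    (f := fun m' (_j : Fin (s+1)) => f m')
  have key : ∑ x ∈ (A ×ˢ (univ : Finset (Fin (s+1)))).sigma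
      (fun q => Finset.range (q.1 q.2 + 1)), f (splice x.1.1 x.1.2.val x.2)
      = ∑ y ∈ B ×ˢ (univ : Finset (Fin (s+1))), f y.1 := by
    refine Finset.sum_nbij' (fun x => (splice x.1.1 x.1.2.val x.2, x.1.2))
      (fun y => ⟨(merge y.1 y.2.val, y.2), y.1 y.2.castSucc⟩) ?_ ?_ ?_ ?_ ?_
    · rintro ⟨⟨m, j⟩, k⟩ hx
      simp only [hA, hB, mem_sigma, mem_product, Finset.Nat.mem_antidiagonalTuple, mem_univ,
        and_true, mem_range, true_and] at hx ⊢
      obtain ⟨hm, hk⟩ := hx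
      rw [sum_splice m j k (by omega)]
      exact hm
    · rintro ⟨m', j⟩ hy
      simp only [hA, hB, mem_sigma, mem_product, Finset.Nat.mem_antidiagonalTuple, mem_univ,
        and_true, mem_range, true_and] at hy ⊢
      refine ⟨by rw [sum_merge m' j]; exact hy, ?_⟩
      rw [merge_apply m' j]
      omega
    · rintro ⟨⟨m, j⟩, k⟩ hx
      simp only [hA, mem_sigma, mem_product, Finset.Nat.mem_antidiagonalTuple, mem_univ,
        and_true, mem_range, true_and] at hx
      obtain ⟨hm, hk⟩ := hx
      dsimp only
      rw [merge_splice m j k (by omega), splice_apply m j k]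
    · rintro ⟨m', j⟩ hy
      dsimp only
      rw [splice_merge m' j]
    · rintro ⟨⟨m, j⟩, k⟩ _
      rfl
  exact h0.symm.trans (h1.trans (key.trans h2))

/-! ### The basic matrix products indexed by tuples -/

variable {n : ℕ}

noncomputable def Pterm (b : Matrix (Fin n) (Fin n) ℂ) :
    ∀ {s : ℕ}, (Fin (s+1) → ℕ) → Matrix (Fin n) (Fin n) ℂ → Matrix (Fin n) (Fin n) ℂ
  | 0, m, X => X ^ (m 0 + 1)
  | _+1, m, X => X ^ (m 0 + 1) * b * Pterm b (Fin.tail m) X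

lemma Pterm_zero (b : Matrix (Fin n) (Fin n) ℂ) (m : Fin 1 → ℕ) (X : Matrix (Fin n) (Fin n) ℂ) :
    Pterm b m X = X ^ (m 0 + 1) := rfl

lemma Pterm_succ {s : ℕ} (b : Matrix (Fin n) (Fin n) ℂ) (m : Fin (s+2) → ℕ)
    (X : Matrix (Fin n) (Fin n) ℂ) :
    Pterm b m X = X ^ (m 0 + 1) * b * Pterm b (Fin.tail m) X := rfl

lemma Pterm_eq {s : ℕ} (b : Matrix (Fin n) (Fin n) ℂ) (m : Fin (s+1) → ℕ)
    (X : Matrix (Fin n) (Fin n) ℂ) :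
    Pterm b m X = X ^ (m 0 + 1) * (List.ofFn fun j : Fin s => b * X ^ (m j.succ + 1)).prod := by
  induction s with
  | zero => simp [Pterm_zero]
  | succ s ih =>
    rw [Pterm_succ, ih (Fin.tail m), List.ofFn_succ, List.prod_cons]
    simp only [Fin.tail]
    simp only [mul_assoc]

end IterDerivAux
open IterDerivAux

variable {n : ℕ} (a b : Matrix (Fin n) (Fin n) ℂ)

lemma hasDerivAt_inv' (l : ℝ) (hl : IsUnit (a + l • b).det) :
    HasDerivAt (fun t : ℝ => (a + t • b)⁻¹)
      (-((a + l • b)⁻¹ * b * (a + l • b)⁻¹)) l := by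
  have hA : HasDerivAt (fun t : ℝ => a + t • b) b l := by
    have h := ((hasDerivAt_id l).smul_const b).const_add a
    simp only [one_smul] at h
    exact h
  obtain ⟨u, hu⟩ := (Matrix.isUnit_iff_isUnit_det _).mpr hl
  have hinv : HasFDerivAt Ring.inverse
      (-(ContinuousLinearMap.mulLeftRight ℝ (Matrix (Fin n) (Fin n) ℂ) ↑u⁻¹) ↑u⁻¹)
      (a + l • b) := hu ▸ hasFDerivAt_ringInverse u
  have h2 := hinv.comp_hasDerivAt l hA
  have hcoe : (↑u⁻¹ : Matrix (Fin n) (Fin n) ℂ) = (a + l • b)⁻¹ := by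
    rw [← Ring.inverse_unit u, hu, ← Matrix.nonsing_inv_eq_ringInverse]
  have hfun : (Ring.inverse ∘ fun t : ℝ => a + t • b) = fun t : ℝ => (a + t • b)⁻¹ := by
    funext t
    simp [Function.comp, ← Matrix.nonsing_inv_eq_ringInverse]
  rw [hfun] at h2
  refine h2.congr_deriv ?_
  symm
  rw [← hcoe]
  simp [ContinuousLinearMap.neg_apply, ContinuousLinearMap.mulLeftRight_apply]

lemma hasDerivAt_inv_pow (l : ℝ) (hl : IsUnit (a + l • b).det) (e : ℕ) :
    HasDerivAt (fun t : ℝ => (a + t • b)⁻¹ ^ (e+1))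
      (-(∑ k ∈ Finset.range (e+1),
          (a + l • b)⁻¹ ^ (k+1) * b * (a + l • b)⁻¹ ^ (e+1-k))) l := by
  induction e with
  | zero =>
    have h := hasDerivAt_inv' a b l hl
    have hfun : (fun t : ℝ => (a + t • b)⁻¹ ^ (0+1)) = fun t : ℝ => (a + t • b)⁻¹ := by
      funext t; rw [pow_one]
    rw [hfun]
    convert h using 1
    simp
  | succ e ih =>
    have h := (hasDerivAt_inv' a b l hl).mul ih
    have hfun : (fun t : ℝ => (a + t • b)⁻¹ * (a + t • b)⁻¹ ^ (e+1))
        = fun t : ℝ => (a + t • b)⁻¹ ^ (e+1+1) := by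
      funext t; rw [← pow_succ']
    rw [show ((fun t : ℝ => (a + t • b)⁻¹) * fun t : ℝ => (a + t • b)⁻¹ ^ (e+1))
        = fun t : ℝ => (a + t • b)⁻¹ * (a + t • b)⁻¹ ^ (e+1) from rfl, hfun] at h
    refine h.congr_deriv ?_
    symm
    rw [Finset.sum_range_succ' _ (e+1), neg_add, add_comm]
    congr 1
    · rw [neg_mul]
      congr 1
      simp only [Nat.sub_zero, pow_one, zero_add]
      simp only [mul_assoc]
      rw [← pow_succ']
    · rw [mul_neg]
      congr 1
      rw [Finset.mul_sum]
      refine Finset.sum_congr rfl fun k hk => ?_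
      rw [show e+1+1-(k+1) = e+1-k from by omega, pow_succ' _ (k+1)]
      simp only [mul_assoc]

lemma hasDerivAt_Pterm (l : ℝ) (hl : IsUnit (a + l • b).det) :
    ∀ {s : ℕ} (m : Fin (s+1) → ℕ),
    HasDerivAt (fun t : ℝ => Pterm b m ((a + t • b)⁻¹))
      (-(∑ j : Fin (s+1), ∑ k ∈ Finset.range (m j + 1),
          Pterm b (splice m j.val k) ((a + l • b)⁻¹))) l := by
  intro s
  induction s with
  | zero =>
    intro m
    have h := hasDerivAt_inv_pow a b l hl (m 0)
    refine h.congr_deriv ?_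
    symm
    rw [Fin.sum_univ_one]
    congr 1
    refine Finset.sum_congr rfl fun k hk => ?_
    have hk' := Finset.mem_range.mp hk
    rw [Fin.val_zero, splice_zero, Pterm_succ, Fin.cons_zero, Fin.tail_cons,
      Pterm_zero, Fin.cons_zero]
    rw [show m 0 + 1 - k = (m 0 - k) + 1 from by omega]
  | succ s ih =>
    intro m
    have h := ((hasDerivAt_inv_pow a b l hl (m 0)).mul_const b).mul (ih (Fin.tail m))
    refine h.congr_deriv ?_
    symm
    rw [Fin.sum_univ_succ, neg_add]
    congr 1
    · rw [neg_mul, neg_mul]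
      congr 1
      rw [Finset.sum_mul, Finset.sum_mul]
      refine Finset.sum_congr rfl fun k hk => ?_
      have hk' := Finset.mem_range.mp hk
      rw [Fin.val_zero, splice_zero, Pterm_succ, Fin.cons_zero, Fin.tail_cons,
        Pterm_succ, Fin.cons_zero, Fin.tail_cons]
      rw [show m 0 + 1 - k = (m 0 - k) + 1 from by omega]
      simp only [mul_assoc]
    · rw [mul_neg]
      congr 1
      rw [Finset.mul_sum]
      refine Finset.sum_congr rfl fun j _ => ?_
      rw [Finset.mul_sum]
      refine Finset.sum_congr rfl fun k _ => ?_
      rw [Fin.val_succ, splice_succ, Pterm_succ, Fin.cons_zero, Fin.tail_cons]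

lemma key_iter (p : ℕ) (hp : 0 < p)
    (hopen : IsOpen {l : ℝ | IsUnit (a + l • b).det}) :
    ∀ (r : ℕ) (l : ℝ), IsUnit (a + l • b).det →
    iteratedDeriv r (fun t : ℝ => (a + t • b)⁻¹ ^ p) l
      = ((-1:ℂ)^r * (Nat.factorial r : ℂ)) •
          ∑ m ∈ Finset.Nat.antidiagonalTuple (r+1) (p-1),
            Pterm b m ((a + l • b)⁻¹) := by
  intro r
  induction r with
  | zero =>
    intro l hl
    rw [iteratedDeriv_zero, Finset.Nat.antidiagonalTuple_one, Finset.sum_singleton,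
      Pterm_zero]
    simp only [pow_zero, Nat.factorial_zero, Nat.cast_one, mul_one, one_smul,
      Matrix.cons_val_zero]
    rw [show p - 1 + 1 = p from by omega]
  | succ r ih =>
    intro l hl
    rw [iteratedDeriv_succ]
    have hev : iteratedDeriv r (fun t : ℝ => (a + t • b)⁻¹ ^ p)
        =ᶠ[nhds l] fun t => ((-1:ℂ)^r * (Nat.factorial r : ℂ)) •
          ∑ m ∈ Finset.Nat.antidiagonalTuple (r+1) (p-1),
            Pterm b m ((a + t • b)⁻¹) := by
      filter_upwards [hopen.mem_nhds hl] with t ht using ih t ht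
    rw [hev.deriv_eq]
    have hF : HasDerivAt (fun t : ℝ => ∑ m ∈ Finset.Nat.antidiagonalTuple (r+1) (p-1),
          Pterm b m ((a + t • b)⁻¹))
        (∑ m ∈ Finset.Nat.antidiagonalTuple (r+1) (p-1),
          -(∑ j : Fin (r+1), ∑ k ∈ Finset.range (m j + 1),
            Pterm b (splice m j.val k) ((a + l • b)⁻¹))) l :=
      HasDerivAt.fun_sum fun m _ => hasDerivAt_Pterm a b l hl m
    have hF2 := hF.fun_const_smul ((-1:ℂ)^r * (Nat.factorial r : ℂ))
    rw [hF2.deriv]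
    rw [Finset.sum_neg_distrib, triple_sum (fun m' => Pterm b m' ((a + l • b)⁻¹))]
    simp only [Finset.sum_const, Finset.card_univ, Fintype.card_fin]
    rw [← Finset.smul_sum, ← Nat.cast_smul_eq_nsmul ℂ, ← neg_smul, smul_smul]
    congr 1
    push_cast [Nat.factorial_succ]
    ring

theorem iteratedDeriv_inv_pow_eq_sum {n : ℕ} (a b : Matrix (Fin n) (Fin n) ℂ)
    (ha : a.PosDef) (hb : b.IsHermitian) (p r : ℕ) (hp : 0 < p) (hr : 0 < r) :
    ∀ᶠ l in nhds (0 : ℝ), IsUnit (a + l • b).det ∧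
      iteratedDeriv r (fun t : ℝ => ((a + t • b)⁻¹) ^ p) l =
        ((-1 : ℂ) ^ r * ((Nat.factorial r : ℕ) : ℂ)) •
          ∑ i ∈ (Finset.Nat.antidiagonalTuple (r + 1) (p + r)).filter
              (fun i => ∀ j, 1 ≤ i j ∧ i j ≤ p),
            ((a + l • b)⁻¹) ^ (i 0) *
              (List.ofFn fun j : Fin r => b * ((a + l • b)⁻¹) ^ (i j.succ)).prod := by
  classical
  have hent : ∀ i j, Continuous fun l : ℝ => (a + l • b) i j := by
    intro i j
    simp only [Matrix.add_apply, Matrix.smul_apply]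
    exact continuous_const.add (continuous_id.smul continuous_const)
  have hcont : Continuous fun l : ℝ => (a + l • b).det := by
    simp only [Matrix.det_apply']
    exact continuous_finset_sum _ fun σ _ =>
      continuous_const.mul (continuous_finset_prod _ fun i _ => hent (σ i) i)
  have hopen : IsOpen {l : ℝ | IsUnit (a + l • b).det} := by
    have h1 : {l : ℝ | IsUnit (a + l • b).det}
        = (fun l : ℝ => (a + l • b).det) ⁻¹' {0}ᶜ := by
      ext l
      simp [isUnit_iff_ne_zero]
    rw [h1]
    exact isOpen_compl_singleton.preimage hcont
  have h0 : IsUnit (a + (0:ℝ) • b).det := by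
    simp only [zero_smul, add_zero]
    exact isUnit_iff_ne_zero.mpr ha.det_pos.ne'
  filter_upwards [hopen.mem_nhds h0] with l hl
  refine ⟨hl, ?_⟩
  rw [key_iter a b p hp hopen r l hl]
  congr 1
  refine Finset.sum_nbij' (i := fun m => fun j => m j + 1) (j := fun i => fun j => i j - 1)
    ?_ ?_ ?_ ?_ ?_
  · intro m hm
    rw [Finset.Nat.mem_antidiagonalTuple] at hm
    rw [Finset.mem_filter, Finset.Nat.mem_antidiagonalTuple]
    constructor
    · rw [Finset.sum_add_distrib, Finset.sum_const, Finset.card_univ, Fintype.card_fin,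
        hm, smul_eq_mul, mul_one]
      omega
    · intro j
      have hle : m j ≤ ∑ t, m t :=
        Finset.single_le_sum (f := m) (fun i _ => Nat.zero_le _) (Finset.mem_univ j)
      rw [hm] at hle
      dsimp only
      omega
  · intro i hi
    rw [Finset.mem_filter, Finset.Nat.mem_antidiagonalTuple] at hi
    obtain ⟨hsum, hbd⟩ := hi
    rw [Finset.Nat.mem_antidiagonalTuple]
    have h2 : ∑ j, (i j - 1 + 1) = ∑ j, i j :=
      Finset.sum_congr rfl fun j _ => by have := (hbd j).1; omega
    rw [Finset.sum_add_distrib, Finset.sum_const, Finset.card_univ, Fintype.card_fin,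
      smul_eq_mul, mul_one, hsum] at h2
    omega
  · intro m hm
    funext j
    simp
  · intro i hi
    rw [Finset.mem_filter] at hi
    funext j
    have := (hi.2 j).1
    dsimp only
    omega
  · intro m hm
    dsimp only
    exact Pterm_eq b m _
end

section
/- Let A and B be n×n complex matrices and let p, r be positive integers. Then the sum over all (r+1)-tuples (i₁, …, i_{r+1}) of non-negative integers with i₁ + ⋯ + i_{r+1} = p − 1 of Tr(A · A^{i₁} B A^{i₂} B ⋯ B A^{i_{r+1}}) equals (p/(p+r)) times the sum over all (r+1)-tuples (i₁, …, i_{r+1}) of non-negative integers with 0 ≤ i_j ≤ p and i₁ + ⋯ + i_{r+1} = p of Tr(A^{i₁} B A^{i₂} B ⋯ B A^{i_{r+1}}). -/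
open Matrix Finset

namespace TraceAux

variable {n : ℕ} (A B : Matrix (Fin n) (Fin n) ℂ)

noncomputable def h : ℕ → ℕ → Matrix (Fin n) (Fin n) ℂ
  | 0, 0 => 1
  | 0, _ + 1 => 0
  | N + 1, 0 => A * h N 0
  | N + 1, k + 1 => A * h N (k + 1) + B * h N k
  termination_by N k => (N, k)

noncomputable def hB : ℕ → ℕ → Matrix (Fin n) (Fin n) ℂ
  | _, 0 => 0
  | N, k + 1 => h A B N k

lemma h_succ (N k : ℕ) : h A B (N + 1) k = A * h A B N k + B * hB A B N k := by
  cases k <;> simp [h, hB]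

lemma h_zero_zero : h A B 0 0 = 1 := by simp [h]

lemma h_zero_succ (k : ℕ) : h A B 0 (k + 1) = 0 := by simp [h]

lemma h_zero_right (N : ℕ) : h A B N 0 = A ^ N := by
  induction N with
  | zero => simp [h]
  | succ N ih => rw [h_succ, ih, hB, pow_succ']; simp

lemma h_eq_zero_of_lt : ∀ N k : ℕ, N < k → h A B N k = 0 := by
  intro N
  induction N with
  | zero =>
    intro k hk
    obtain ⟨k, rfl⟩ := Nat.exists_eq_add_of_lt hk
    simp [h]
  | succ N ih =>
    intro k hk
    obtain ⟨k, rfl⟩ : ∃ k', k = k' + 1 := ⟨k - 1, by omega⟩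
    rw [h_succ, hB, ih _ (by omega), ih _ (by omega)]
    simp

/-- concatenation: words of length `m + j` split into prefix and suffix. -/
lemma h_concat : ∀ m j k : ℕ,
    h A B (m + j) k = ∑ kp ∈ Finset.HasAntidiagonal.antidiagonal k, h A B m kp.1 * h A B j kp.2 := by
  intro m
  induction m with
  | zero =>
    intro j k
    rw [Finset.sum_eq_single ((0 : ℕ), k)]
    · simp [h_zero_zero]
    · rintro ⟨k1, k2⟩ hmem hne
      rcases k1 with _ | k1
      · exfalso; apply hne
        have := Finset.HasAntidiagonal.mem_antidiagonal.mp hmem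
        simp at this
        simp [this]
      · simp [h_zero_succ]
    · intro habs
      exact absurd (Finset.HasAntidiagonal.mem_antidiagonal.mpr (by simp)) habs
  | succ m ih =>
    intro j k
    have hadd : m + 1 + j = (m + j) + 1 := by omega
    rw [hadd, h_succ, ih]
    have hexp : ∀ kp ∈ Finset.HasAntidiagonal.antidiagonal k,
        h A B (m + 1) kp.1 * h A B j kp.2
          = A * (h A B m kp.1 * h A B j kp.2) + B * (hB A B m kp.1 * h A B j kp.2) := by
      rintro ⟨k1, k2⟩ _
      rw [h_succ, add_mul, mul_assoc, mul_assoc]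
    rw [Finset.sum_congr rfl hexp, Finset.sum_add_distrib, ← Finset.mul_sum, ← Finset.mul_sum]
    congr 1
    -- B part
    congr 1
    cases k with
    | zero => simp [hB]
    | succ k' =>
      rw [hB, ih, Finset.Nat.antidiagonal_succ, Finset.sum_cons]
      simp [hB]

end TraceAux

namespace TraceAux

variable {n : ℕ} (A B : Matrix (Fin n) (Fin n) ℂ)

lemma h_split (r : ℕ) : ∀ p : ℕ,
    h A B (p + r + 1) (r + 1)
      = ∑ ab ∈ Finset.HasAntidiagonal.antidiagonal p, A ^ ab.1 * (B * h A B (ab.2 + r) r) := by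
  intro p
  induction p with
  | zero =>
    rw [show (0 : ℕ) + r + 1 = r + 1 by omega, h_succ,
      h_eq_zero_of_lt A B r (r + 1) (by omega)]
    simp [hB]
  | succ p ih =>
    rw [show p + 1 + r + 1 = (p + r + 1) + 1 by omega, h_succ, ih,
      Finset.Nat.antidiagonal_succ, Finset.sum_cons, Finset.mul_sum]
    rw [show hB A B (p + r + 1) (r + 1) = h A B (p + r + 1) r from rfl]
    rw [Finset.sum_map]
    simp only [Function.Embedding.coe_prodMap, Function.Embedding.coeFn_mk,
      Function.Embedding.refl_apply, Prod.map_fst, Prod.map_snd, pow_succ', pow_zero, one_mul,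
      mul_assoc]
    rw [show p + 1 + r = p + r + 1 by omega]
    exact add_comm _ _

/-- key double-counting (rotation) identity -/
lemma h_count : ∀ m k : ℕ,
    ((m : ℂ) + 1 - (k : ℂ)) • h A B (m + 1) k
      = ∑ j ∈ Finset.HasAntidiagonal.antidiagonal m, ∑ kp ∈ Finset.HasAntidiagonal.antidiagonal k,
          h A B j.1 kp.1 * A * h A B j.2 kp.2 := by
  intro m
  induction m with
  | zero =>
    intro k
    have hz : Finset.HasAntidiagonal.antidiagonal (0:ℕ) = {((0:ℕ), (0:ℕ))} := rfl
    rw [hz, Finset.sum_singleton]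
    cases k with
    | zero =>
      simp [h_zero_zero, h_succ, hB, h_zero_right]
    | succ k' =>
      have hrhs : ∑ kp ∈ Finset.HasAntidiagonal.antidiagonal (k' + 1),
          h A B 0 kp.1 * A * h A B 0 kp.2 = 0 := by
        rw [Finset.Nat.antidiagonal_succ, Finset.sum_cons, Finset.sum_map]
        simp [h_zero_succ]
      rw [hrhs]
      cases k' with
      | zero => simp
      | succ k'' => simp [h_succ, hB, h_zero_succ]
  | succ m ih =>
    intro k
    rw [Finset.Nat.antidiagonal_succ, Finset.sum_cons, Finset.sum_map]
    -- first term: j = (0, m+1)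
    have hfst : ∑ kp ∈ Finset.HasAntidiagonal.antidiagonal k,
        h A B 0 kp.1 * A * h A B (m + 1) kp.2 = A * h A B (m + 1) k := by
      rw [Finset.sum_eq_single ((0 : ℕ), k)]
      · simp [h_zero_zero]
      · rintro ⟨k1, k2⟩ hmem hne
        rcases k1 with _ | k1
        · exfalso; apply hne
          have := Finset.HasAntidiagonal.mem_antidiagonal.mp hmem
          simp at this
          simp [this]
        · simp [h_zero_succ]
      · intro habs
        exact absurd (Finset.HasAntidiagonal.mem_antidiagonal.mpr (by simp)) habs
    rw [hfst]
    simp only [Function.Embedding.coe_prodMap, Function.Embedding.coeFn_mk,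
      Function.Embedding.refl_apply, Prod.map_fst, Prod.map_snd, Prod.map_apply,
      Nat.succ_eq_add_one]
    have hexp : ∀ j ∈ Finset.HasAntidiagonal.antidiagonal m, ∑ kp ∈ Finset.HasAntidiagonal.antidiagonal k,
        h A B (j.1 + 1) kp.1 * A * h A B j.2 kp.2
        = (∑ kp ∈ Finset.HasAntidiagonal.antidiagonal k,
            A * (h A B j.1 kp.1 * A * h A B j.2 kp.2))
          + ∑ kp ∈ Finset.HasAntidiagonal.antidiagonal k,
            B * (hB A B j.1 kp.1 * A * h A B j.2 kp.2) := by
      intro j _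
      rw [← Finset.sum_add_distrib]
      refine Finset.sum_congr rfl fun kp _ => ?_
      rw [h_succ]; noncomm_ring
    rw [Finset.sum_congr rfl hexp, Finset.sum_add_distrib]
    simp only [← Finset.mul_sum]
    rw [← ih]
    -- now handle B-part depending on k
    cases k with
    | zero =>
      have hz0 : ∑ j ∈ Finset.HasAntidiagonal.antidiagonal m, ∑ kp ∈ Finset.HasAntidiagonal.antidiagonal (0:ℕ),
          hB A B j.1 kp.1 * A * h A B j.2 kp.2 = 0 := by
        refine Finset.sum_eq_zero fun j _ => ?_
        simp [hB]
      rw [hz0, mul_zero, add_zero, mul_smul_comm, h_succ,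
        show hB A B (m + 1) 0 = (0 : Matrix (Fin n) (Fin n) ℂ) from rfl, mul_zero, add_zero]
      push_cast
      module
    | succ k' =>
      have hbpart : ∑ j ∈ Finset.HasAntidiagonal.antidiagonal m, ∑ kp ∈ Finset.HasAntidiagonal.antidiagonal (k' + 1),
          hB A B j.1 kp.1 * A * h A B j.2 kp.2
          = ∑ j ∈ Finset.HasAntidiagonal.antidiagonal m, ∑ kp ∈ Finset.HasAntidiagonal.antidiagonal k',
              h A B j.1 kp.1 * A * h A B j.2 kp.2 := by
        refine Finset.sum_congr rfl fun j _ => ?_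
        rw [Finset.Nat.antidiagonal_succ, Finset.sum_cons, Finset.sum_map]
        simp [hB]
      rw [hbpart, ← ih]
      rw [h_succ A B (m + 1) (k' + 1)]
      rw [show hB A B (m + 1) (k' + 1) = h A B (m + 1) k' from rfl]
      rw [mul_smul_comm, mul_smul_comm, smul_add]
      push_cast
      module

end TraceAux

namespace TraceAux

variable {n : ℕ} (A B : Matrix (Fin n) (Fin n) ℂ)

lemma trace_count (m k : ℕ) :
    ((m : ℂ) + 1 - (k : ℂ)) * (h A B (m + 1) k).trace
      = ((m : ℂ) + 1) * (A * h A B m k).trace := by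
  have E := congrArg Matrix.trace (h_count A B m k)
  rw [Matrix.trace_smul, smul_eq_mul, Matrix.trace_sum] at E
  simp only [Matrix.trace_sum] at E
  have hj : ∀ j ∈ Finset.HasAntidiagonal.antidiagonal m,
      ∑ kp ∈ Finset.HasAntidiagonal.antidiagonal k, (h A B j.1 kp.1 * A * h A B j.2 kp.2).trace
        = (A * h A B m k).trace := by
    intro j hjm
    have hj12 : j.1 + j.2 = m := Finset.HasAntidiagonal.mem_antidiagonal.mp hjm
    have step1 : ∀ kp : ℕ × ℕ, (h A B j.1 kp.1 * A * h A B j.2 kp.2).trace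
        = (A * (h A B j.2 kp.2 * h A B j.1 kp.1)).trace := by
      intro kp
      rw [mul_assoc, Matrix.trace_mul_comm, ← mul_assoc]
    have hswap : ∑ kp ∈ Finset.HasAntidiagonal.antidiagonal k, h A B j.2 kp.2 * h A B j.1 kp.1
        = h A B m k := by
      have hc := h_concat A B j.2 j.1 k
      rw [show j.2 + j.1 = m by omega] at hc
      rw [← Finset.HasAntidiagonal.map_swap_antidiagonal, Finset.sum_map]
      simp only [Function.Embedding.coeFn_mk, Prod.fst_swap, Prod.snd_swap]
      exact hc.symm
    calc ∑ kp ∈ Finset.HasAntidiagonal.antidiagonal k, (h A B j.1 kp.1 * A * h A B j.2 kp.2).trace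
        = ∑ kp ∈ Finset.HasAntidiagonal.antidiagonal k,
            (A * (h A B j.2 kp.2 * h A B j.1 kp.1)).trace :=
          Finset.sum_congr rfl fun kp _ => step1 kp
      _ = (A * ∑ kp ∈ Finset.HasAntidiagonal.antidiagonal k, h A B j.2 kp.2 * h A B j.1 kp.1).trace := by
          rw [Finset.mul_sum, Matrix.trace_sum]
      _ = (A * h A B m k).trace := by rw [hswap]
  rw [Finset.sum_congr rfl hj, Finset.sum_const, Finset.Nat.card_antidiagonal,
    nsmul_eq_mul] at E
  rw [E]
  push_cast
  ring

lemma sum_antidiagonalTuple_succ {M : Type*} [AddCommMonoid M] (k p : ℕ)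
    (f : (Fin (k + 1) → ℕ) → M) :
    ∑ i ∈ Finset.Nat.antidiagonalTuple (k + 1) p, f i
      = ∑ ab ∈ Finset.HasAntidiagonal.antidiagonal p, ∑ x ∈ Finset.Nat.antidiagonalTuple k ab.2,
          f (Fin.cons ab.1 x) := by
  rw [Finset.sum_sigma']
  refine Finset.sum_nbij' (fun y => ⟨(y 0, ∑ i, y (Fin.succ i)), Fin.tail y⟩)
    (fun q => Fin.cons q.1.1 q.2) ?_ ?_ ?_ ?_ ?_
  · intro y hy
    rw [Finset.Nat.mem_antidiagonalTuple] at hy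
    rw [Finset.mem_sigma]
    constructor
    · rw [Finset.HasAntidiagonal.mem_antidiagonal]
      rw [← hy, Fin.sum_univ_succ]
    · rw [Finset.Nat.mem_antidiagonalTuple]
      rfl
  · rintro ⟨⟨a, b⟩, x⟩ hq
    rw [Finset.mem_sigma] at hq
    obtain ⟨hab, hx⟩ := hq
    rw [Finset.Nat.mem_antidiagonalTuple] at hx ⊢
    rw [Fin.sum_cons, hx]
    exact Finset.HasAntidiagonal.mem_antidiagonal.mp hab
  · intro y _
    exact Fin.cons_self_tail y
  · rintro ⟨⟨a, b⟩, x⟩ hq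
    rw [Finset.mem_sigma] at hq
    obtain ⟨hab, hx⟩ := hq
    rw [Finset.Nat.mem_antidiagonalTuple] at hx
    have h2 : ∀ i : Fin k, (Fin.cons a x : Fin (k+1) → ℕ) (Fin.succ i) = x i :=
      fun i => Fin.cons_succ _ _ _
    have h3 : (∑ i, (Fin.cons a x : Fin (k+1) → ℕ) (Fin.succ i)) = b := by
      simp only [h2]; exact hx
    refine Sigma.ext ?_ ?_
    · have : ((Fin.cons a x : Fin (k+1) → ℕ) 0, ∑ i, (Fin.cons a x : Fin (k+1) → ℕ) (Fin.succ i)) = (a, b) := by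
        rw [Fin.cons_zero, h3]
      simpa using this
    · simp
  · intro y hy
    rw [Fin.cons_self_tail y]

lemma g_eq_h : ∀ r p : ℕ,
    ∑ i ∈ Finset.Nat.antidiagonalTuple (r + 1) p,
        A ^ (i 0) * (List.ofFn fun j : Fin r => B * A ^ (i j.succ)).prod
      = h A B (p + r) r := by
  intro r
  induction r with
  | zero =>
    intro p
    rw [Finset.Nat.antidiagonalTuple_one, Finset.sum_singleton]
    simp [h_zero_right]
  | succ r ih =>
    intro p
    rw [sum_antidiagonalTuple_succ]
    have hab : ∀ ab ∈ Finset.HasAntidiagonal.antidiagonal p,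
        ∑ x ∈ Finset.Nat.antidiagonalTuple (r + 1) ab.2,
          A ^ ((Fin.cons ab.1 x : Fin (r+2) → ℕ) 0) *
            (List.ofFn fun j : Fin (r+1) =>
              B * A ^ ((Fin.cons ab.1 x : Fin (r+2) → ℕ) j.succ)).prod
        = A ^ ab.1 * (B * h A B (ab.2 + r) r) := by
      intro ab _
      have hx : ∀ x ∈ Finset.Nat.antidiagonalTuple (r + 1) ab.2,
          A ^ ((Fin.cons ab.1 x : Fin (r+2) → ℕ) 0) *
            (List.ofFn fun j : Fin (r+1) =>
              B * A ^ ((Fin.cons ab.1 x : Fin (r+2) → ℕ) j.succ)).prod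
          = A ^ ab.1 * (B * (A ^ (x 0) *
              (List.ofFn fun j : Fin r => B * A ^ (x j.succ)).prod)) := by
        intro x _
        rw [Fin.cons_zero]
        have hfn : (List.ofFn fun j : Fin (r+1) =>
            B * A ^ ((Fin.cons ab.1 x : Fin (r+2) → ℕ) j.succ))
            = List.ofFn fun j : Fin (r+1) => B * A ^ (x j) := by
          simp only [Fin.cons_succ]
        rw [hfn, List.ofFn_succ, List.prod_cons]
        simp only [mul_assoc]
      rw [Finset.sum_congr rfl hx, ← Finset.mul_sum, ← Finset.mul_sum, ih ab.2]
    rw [Finset.sum_congr rfl hab, ← h_split]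
    rfl

end TraceAux

open Matrix

theorem trace_sum_identity {n : ℕ} (A B : Matrix (Fin n) (Fin n) ℂ)
    (p r : ℕ) (hp : 0 < p) (hr : 0 < r) :
    ∑ i ∈ Finset.Nat.antidiagonalTuple (r + 1) (p - 1),
        (A * (A ^ (i 0) * (List.ofFn fun j : Fin r => B * A ^ (i j.succ)).prod)).trace =
      ((p : ℂ) / ((p : ℂ) + (r : ℂ))) *
        ∑ i ∈ Finset.Nat.antidiagonalTuple (r + 1) p,
          (A ^ (i 0) * (List.ofFn fun j : Fin r => B * A ^ (i j.succ)).prod).trace := by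
  have hL : ∑ i ∈ Finset.Nat.antidiagonalTuple (r + 1) (p - 1),
      (A * (A ^ (i 0) * (List.ofFn fun j : Fin r => B * A ^ (i j.succ)).prod)).trace
      = (A * TraceAux.h A B (p + r - 1) r).trace := by
    rw [← Matrix.trace_sum, ← Finset.mul_sum, TraceAux.g_eq_h A B r (p - 1),
      show p - 1 + r = p + r - 1 by omega]
  have hR : ∑ i ∈ Finset.Nat.antidiagonalTuple (r + 1) p,
      (A ^ (i 0) * (List.ofFn fun j : Fin r => B * A ^ (i j.succ)).prod).trace
      = (TraceAux.h A B (p + r) r).trace := by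
    rw [← Matrix.trace_sum, TraceAux.g_eq_h A B r p]
  rw [hL, hR]
  have key := TraceAux.trace_count A B (p + r - 1) r
  rw [show p + r - 1 + 1 = p + r by omega] at key
  have hcast : ((p + r - 1 : ℕ) : ℂ) = (p : ℂ) + (r : ℂ) - 1 := by
    rw [Nat.cast_sub (by omega : 1 ≤ p + r)]
    push_cast
    ring
  rw [hcast] at key
  have hne : (p : ℂ) + (r : ℂ) ≠ 0 := by
    have : ((p + r : ℕ) : ℂ) ≠ 0 := Nat.cast_ne_zero.mpr (by omega)
    push_cast at this
    exact this
  field_simp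
  linear_combination -key
end

section
/- For all positive semidefinite Hermitian 2×2 complex matrices A and B and every positive integer p, the polynomial λ ↦ Tr((A+λB)^p) has only non-negative coefficients. -/
open MeasureTheory Matrix
open scoped ComplexOrder

/-- `f` is the Laplace transform of a (finite) positive Borel measure supported in `[0, ∞)`. -/
def IsLaplaceTransform (f : ℝ → ℂ) : Prop :=
  ∃ μ : Measure ℝ, IsFiniteMeasure μ ∧ μ (Set.Iio 0) = 0 ∧
    ∀ l : ℝ, 0 ≤ l → f l = ∫ t, (Real.exp (-l * t) : ℂ) ∂μ

/-- For a Hermitian matrix `M`, the matrix `M ^ q` (real exponent), defined via the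
functional calculus (junk value `0` if `M` is not Hermitian). -/
noncomputable def matRpow {n : ℕ} (M : Matrix (Fin n) (Fin n) ℂ) (q : ℝ) :
    Matrix (Fin n) (Fin n) ℂ :=
  if hM : M.IsHermitian then
    (hM.eigenvectorUnitary : Matrix (Fin n) (Fin n) ℂ) *
      Matrix.diagonal (fun i => ((hM.eigenvalues i ^ q : ℝ) : ℂ)) *
      star (hM.eigenvectorUnitary : Matrix (Fin n) (Fin n) ℂ)
  else 0

/-- The polynomial `λ ↦ Tr((A + λ B) ^ p)`. -/
noncomputable def tracePoly {n : ℕ} (A B : Matrix (Fin n) (Fin n) ℂ) (p : ℕ) : Polynomial ℂ :=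
  ((A.map Polynomial.C + (Polynomial.X : Polynomial ℂ) • B.map Polynomial.C) ^ p).trace

section BMVAux

open Polynomial

/-- A polynomial with all coefficients nonnegative (in the complex order). -/
def NNP (q : Polynomial ℂ) : Prop := ∀ k, 0 ≤ q.coeff k

lemma NNP_add {q r : Polynomial ℂ} (hq : NNP q) (hr : NNP r) : NNP (q + r) := fun k => by
  rw [coeff_add]; exact add_nonneg (hq k) (hr k)

lemma NNP_mul {q r : Polynomial ℂ} (hq : NNP q) (hr : NNP r) : NNP (q * r) := fun k => by
  rw [coeff_mul]
  exact Finset.sum_nonneg fun x _ => mul_nonneg (hq x.1) (hr x.2)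

lemma NNP_C {a : ℂ} (ha : 0 ≤ a) : NNP (C a) := fun k => by
  rw [coeff_C]; split <;> simp [ha]

lemma NNP_X : NNP (X : Polynomial ℂ) := fun k => by
  rw [coeff_X]; split <;> simp

lemma NNP_zero : NNP (0 : Polynomial ℂ) := fun k => by simp

lemma NNP_one : NNP (1 : Polynomial ℂ) := fun k => by
  rw [coeff_one]; split <;> simp

lemma NNP_linear {a e : ℂ} (ha : 0 ≤ a) (he : 0 ≤ e) : NNP (C a + C e * X) :=
  NNP_add (NNP_C ha) (NNP_mul (NNP_C he) NNP_X)

lemma NNP_key (N : Matrix (Fin 2) (Fin 2) (Polynomial ℂ)) (f : ℂ)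
    (h00 : NNP (N 0 0)) (h11 : NNP (N 1 1))
    (h01 : N 0 1 = C f * X)
    (h10 : N 1 0 = C (starRingEnd ℂ f) * X) (p : ℕ) :
    NNP ((N ^ p) 0 0) ∧ NNP ((N ^ p) 1 1) ∧
      NNP ((N ^ p) 0 1 * C (starRingEnd ℂ f)) ∧
      NNP ((N ^ p) 1 0 * C f) := by
  have hff : NNP (C f * C (starRingEnd ℂ f)) := by
    rw [← _root_.map_mul, Complex.mul_conj]
    exact NNP_C (by exact_mod_cast Complex.normSq_nonneg f)
  induction p with
  | zero =>
      refine ⟨?_, ?_, ?_, ?_⟩ <;> simp [Matrix.one_apply, NNP_one, NNP_zero]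
  | succ p ih =>
      obtain ⟨i00, i11, i01, i10⟩ := ih
      rw [pow_succ]
      have e00 : (N ^ p * N) 0 0 = (N ^ p) 0 0 * N 0 0 + (N ^ p) 0 1 * N 1 0 := by
        rw [Matrix.mul_apply, Fin.sum_univ_two]
      have e01 : (N ^ p * N) 0 1 = (N ^ p) 0 0 * N 0 1 + (N ^ p) 0 1 * N 1 1 := by
        rw [Matrix.mul_apply, Fin.sum_univ_two]
      have e10 : (N ^ p * N) 1 0 = (N ^ p) 1 0 * N 0 0 + (N ^ p) 1 1 * N 1 0 := by
        rw [Matrix.mul_apply, Fin.sum_univ_two]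
      have e11 : (N ^ p * N) 1 1 = (N ^ p) 1 0 * N 0 1 + (N ^ p) 1 1 * N 1 1 := by
        rw [Matrix.mul_apply, Fin.sum_univ_two]
      refine ⟨?_, ?_, ?_, ?_⟩
      · rw [e00, h10]
        have : (N ^ p) 0 1 * (C (starRingEnd ℂ f) * X)
            = ((N ^ p) 0 1 * C (starRingEnd ℂ f)) * X := by ring
        rw [this]
        exact NNP_add (NNP_mul i00 h00) (NNP_mul i01 NNP_X)
      · rw [e11, h01]
        have : (N ^ p) 1 0 * (C f * X) = ((N ^ p) 1 0 * C f) * X := by ring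
        rw [this]
        exact NNP_add (NNP_mul i10 NNP_X) (NNP_mul i11 h11)
      · rw [e01, h01, add_mul]
        have h1 : (N ^ p) 0 0 * (C f * X) * C (starRingEnd ℂ f)
            = (N ^ p) 0 0 * (C f * C (starRingEnd ℂ f)) * X := by ring
        have h2 : (N ^ p) 0 1 * N 1 1 * C (starRingEnd ℂ f)
            = ((N ^ p) 0 1 * C (starRingEnd ℂ f)) * N 1 1 := by ring
        rw [h1, h2]
        exact NNP_add (NNP_mul (NNP_mul i00 hff) NNP_X) (NNP_mul i01 h11)
      · rw [e10, h10, add_mul]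
        have h1 : (N ^ p) 1 0 * N 0 0 * C f = ((N ^ p) 1 0 * C f) * N 0 0 := by ring
        have h2 : (N ^ p) 1 1 * (C (starRingEnd ℂ f) * X) * C f
            = (N ^ p) 1 1 * (C f * C (starRingEnd ℂ f)) * X := by ring
        rw [h1, h2]
        exact NNP_add (NNP_mul i10 h00) (NNP_mul (NNP_mul i11 hff) NNP_X)

lemma conj_pow_aux {R : Type*} [Ring R] (V W M : R) (hWV : W * V = 1) (hVW : V * W = 1)
    (p : ℕ) : (V * M * W) ^ p = V * M ^ p * W := by
  induction p with
  | zero => simpa using hVW.symm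
  | succ p ih =>
      rw [pow_succ, ih, pow_succ]
      calc V * M ^ p * W * (V * M * W) = V * (M ^ p * ((W * V) * (M * W))) := by
            simp only [mul_assoc]
        _ = V * (M ^ p * M) * W := by rw [hWV, one_mul]; simp only [mul_assoc]

lemma NNP_linear' {a e : ℂ} (ha : 0 ≤ a) (he : 0 ≤ e) : NNP (C a + X * C e) := by
  rw [mul_comm]; exact NNP_linear ha he

theorem coeff_nonneg_two_by_two' (A B : Matrix (Fin 2) (Fin 2) ℂ)
    (hA : A.PosSemidef) (hB : B.PosSemidef) (p : ℕ) :
    ∀ k : ℕ, 0 ≤ (((A.map Polynomial.C + (Polynomial.X : Polynomial ℂ) • B.map Polynomial.C) ^ p).trace).coeff k := by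
  intro k
  classical
  set h := hA.1 with hh
  set U : Matrix (Fin 2) (Fin 2) ℂ := (h.eigenvectorUnitary : Matrix (Fin 2) (Fin 2) ℂ) with hU
  have hUmem := h.eigenvectorUnitary.2
  have hU1 : U * star U = 1 := (Matrix.mem_unitaryGroup_iff).mp hUmem
  have hU2 : star U * U = 1 := (Matrix.mem_unitaryGroup_iff').mp hUmem
  set D : Matrix (Fin 2) (Fin 2) ℂ := Matrix.diagonal (RCLike.ofReal ∘ h.eigenvalues) with hD
  have hspec : A = U * D * star U := h.spectral_theorem
  set B' : Matrix (Fin 2) (Fin 2) ℂ := Uᴴ * B * U with hB'def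
  have hB' : B'.PosSemidef := hB.conjTranspose_mul_mul_same U
  set ψ : Matrix (Fin 2) (Fin 2) ℂ →+* Matrix (Fin 2) (Fin 2) (Polynomial ℂ) :=
    (Polynomial.C : ℂ →+* Polynomial ℂ).mapMatrix with hψ
  set N : Matrix (Fin 2) (Fin 2) (Polynomial ℂ) := ψ D + (X : Polynomial ℂ) • ψ B' with hN
  have hBrec : U * B' * star U = B := by
    rw [hB'def, Matrix.star_eq_conjTranspose]
    calc U * (Uᴴ * B * U) * Uᴴ = (U * Uᴴ) * B * (U * Uᴴ) := by
          simp only [Matrix.mul_assoc]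
      _ = B := by rw [← Matrix.star_eq_conjTranspose, hU1, Matrix.one_mul, Matrix.mul_one]
  have hconj : A.map Polynomial.C + (X : Polynomial ℂ) • B.map Polynomial.C
      = ψ U * N * ψ (star U) := by
    rw [hN, Matrix.mul_add, Matrix.add_mul]
    congr 1
    · rw [← _root_.map_mul, ← _root_.map_mul, ← hspec, RingHom.mapMatrix_apply]
    · rw [Matrix.mul_smul, Matrix.smul_mul, ← _root_.map_mul, ← _root_.map_mul, hBrec,
        RingHom.mapMatrix_apply]
  have hψ1 : ψ (star U) * ψ U = 1 := by rw [← _root_.map_mul, hU2, _root_.map_one]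
  have hψ2 : ψ U * ψ (star U) = 1 := by rw [← _root_.map_mul, hU1, _root_.map_one]
  rw [hconj, conj_pow_aux _ _ _ hψ1 hψ2, Matrix.trace_mul_comm, ← Matrix.mul_assoc, hψ1,
    Matrix.one_mul]
  -- now the trace of N ^ p
  set f : ℂ := B' 0 1 with hf
  have hdiagB' : ∀ i : Fin 2, 0 ≤ B' i i := by
    intro i
    fin_cases i <;>
      simpa [dotProduct, Matrix.mulVec, Fin.sum_univ_two, Pi.single_apply] using
        hB'.dotProduct_mulVec_nonneg (Pi.single _ 1)
  have hdiagD : ∀ i : Fin 2, 0 ≤ D i i := by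
    intro i
    rw [hD, Matrix.diagonal_apply_eq]
    exact RCLike.ofReal_nonneg.2 (hA.eigenvalues_nonneg i)
  have entry : ∀ i j, N i j = C (D i j) + X * C (B' i j) := by
    intro i j
    rw [hN]
    simp only [Matrix.add_apply, Matrix.smul_apply, hψ, RingHom.mapMatrix_apply,
      Matrix.map_apply, smul_eq_mul]
  have hN00 : NNP (N 0 0) := by rw [entry 0 0]; exact NNP_linear' (hdiagD 0) (hdiagB' 0)
  have hN11 : NNP (N 1 1) := by rw [entry 1 1]; exact NNP_linear' (hdiagD 1) (hdiagB' 1)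
  have hN01 : N 0 1 = C f * X := by
    rw [entry 0 1, hD, Matrix.diagonal_apply_ne _ (by decide : (0 : Fin 2) ≠ 1)]
    rw [map_zero, zero_add, mul_comm, hf]
  have hN10 : N 1 0 = C (starRingEnd ℂ f) * X := by
    have hfc : B' 1 0 = starRingEnd ℂ f := by rw [hf, ← hB'.1.apply 1 0]; rfl
    rw [entry 1 0, hD, Matrix.diagonal_apply_ne _ (by decide : (1 : Fin 2) ≠ 0)]
    rw [map_zero, zero_add, mul_comm, hfc]
  obtain ⟨i00, i11, -, -⟩ := NNP_key N f hN00 hN11 hN01 hN10 p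
  rw [Matrix.trace_fin_two, coeff_add]
  exact add_nonneg (i00 k) (i11 k)

end BMVAux

theorem coeff_nonneg_two_by_two (A B : Matrix (Fin 2) (Fin 2) ℂ)
    (hA : A.PosSemidef) (hB : B.PosSemidef) (p : ℕ) (hp : 0 < p) :
    ∀ k : ℕ, 0 ≤ (tracePoly A B p).coeff k := by
  intro k
  unfold tracePoly
  exact coeff_nonneg_two_by_two' A B hA hB p k
end

section
/- For any two positive semidefinite Hermitian 2×2 complex matrices A and B, there exists a unitary change of basis in which both A and B are represented by matrices all of whose entries are non-negative real numbers; that is, there is a 2×2 unitary matrix U such that all entries of U*AU and all entries of U*BU are non-negative reals. -/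
open Matrix
open scoped ComplexOrder

lemma psd_diag_nonneg {M : Matrix (Fin 2) (Fin 2) ℂ} (hM : M.PosSemidef) (i : Fin 2) :
    0 ≤ M i i := by
  exact hM.diag_nonneg

theorem exists_unitary_simultaneous_nonneg_entries (A B : Matrix (Fin 2) (Fin 2) ℂ)
    (hA : A.PosSemidef) (hB : B.PosSemidef) :
    ∃ U : Matrix (Fin 2) (Fin 2) ℂ, U ∈ Matrix.unitaryGroup (Fin 2) ℂ ∧
      (∀ i j, 0 ≤ (Uᴴ * A * U) i j) ∧ (∀ i j, 0 ≤ (Uᴴ * B * U) i j) := by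
  set V : Matrix (Fin 2) (Fin 2) ℂ := (hA.1.eigenvectorUnitary : Matrix (Fin 2) (Fin 2) ℂ)
    with hV
  have hVmem : V ∈ Matrix.unitaryGroup (Fin 2) ℂ := (hA.1.eigenvectorUnitary).2
  have hVV : Vᴴ * V = 1 := (Matrix.mem_unitaryGroup_iff').mp hVmem
  have hVA : Vᴴ * A * V = diagonal (Complex.ofReal ∘ hA.1.eigenvalues) := by
    conv_lhs => rw [hA.1.spectral_theorem]
    rw [Unitary.conjStarAlgAut_apply]
    rw [show star (V : Matrix (Fin 2) (Fin 2) ℂ) = Vᴴ from rfl]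
    rw [mul_assoc, mul_assoc, hVV, mul_one, ← mul_assoc, ← hV, hVV, one_mul]
    rfl
  set C : Matrix (Fin 2) (Fin 2) ℂ := Vᴴ * B * V with hC
  have hCpsd : C.PosSemidef := hB.conjTranspose_mul_mul_same V
  set z : ℂ := C 0 1 with hz
  set w : ℂ := if z = 0 then 1 else (starRingEnd ℂ) z / ‖z‖ with hw
  have habsz : (0:ℝ) ≤ ‖z‖ := norm_nonneg z
  have hwabs : star w * w = 1 := by
    rw [hw, Complex.star_def]
    split_ifs with h
    · simp
    · have habs : (‖z‖ : ℂ) ≠ 0 := by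
        simpa using (norm_ne_zero_iff.mpr h)
      rw [map_div₀, Complex.conj_conj, Complex.conj_ofReal, div_mul_div_comm,
        Complex.mul_conj']
      rw [sq]
      exact div_self (mul_ne_zero habs habs)
  have hzw : z * w = ‖z‖ := by
    rw [hw]
    split_ifs with h
    · simp [h]
    · have habs : (‖z‖ : ℂ) ≠ 0 := by
        simpa using (norm_ne_zero_iff.mpr h)
      rw [mul_div_assoc', Complex.mul_conj, Complex.normSq_eq_norm_sq]
      push_cast
      rw [sq, mul_div_assoc, div_self habs, mul_one]
  set d : Fin 2 → ℂ := ![1, w] with hd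
  have hdabs : ∀ i, star (d i) * d i = 1 := by
    intro i
    fin_cases i
    · simp [hd]
    · simpa [hd] using hwabs
  set D : Matrix (Fin 2) (Fin 2) ℂ := diagonal d with hD
  have hDH : Dᴴ = diagonal (fun i => star (d i)) := by
    simp [hD, diagonal_conjTranspose]
  have hDmem : D ∈ Matrix.unitaryGroup (Fin 2) ℂ := by
    rw [Matrix.mem_unitaryGroup_iff']
    show Dᴴ * D = 1
    rw [hDH, hD, diagonal_mul_diagonal]
    simp only [hdabs]
    exact diagonal_one
  have hentry : ∀ (M : Matrix (Fin 2) (Fin 2) ℂ) i j,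
      (Dᴴ * M * D) i j = star (d i) * M i j * d j := by
    intro M i j
    rw [hDH, hD, mul_diagonal, diagonal_mul]
  have hsand : ∀ (M : Matrix (Fin 2) (Fin 2) ℂ),
      (V * D)ᴴ * M * (V * D) = Dᴴ * (Vᴴ * M * V) * D := by
    intro M
    rw [conjTranspose_mul]
    simp only [mul_assoc]
  have hscal : ∀ i (x : ℂ), star (d i) * x * d i = x := by
    intro i x
    rw [show star (d i) * x * d i = star (d i) * d i * x by ring, hdabs i, one_mul]
  refine ⟨V * D, mul_mem hVmem hDmem, ?_, ?_⟩
  · intro i j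
    rw [hsand, hVA, hentry]
    rcases eq_or_ne i j with rfl | hij
    · rw [diagonal_apply_eq, hscal]
      exact Complex.zero_le_real.mpr (hA.eigenvalues_nonneg i)
    · rw [diagonal_apply_ne _ hij, mul_zero, zero_mul]
  · intro i j
    rw [hsand, ← hC, hentry]
    have hC10 : C 1 0 = star z := by
      conv_lhs => rw [← hCpsd.1]
      rw [conjTranspose_apply, hz]
    fin_cases i <;> fin_cases j
    · rw [hscal]
      exact psd_diag_nonneg hCpsd _
    · show 0 ≤ star (d 0) * C 0 1 * d 1
      rw [hd]
      simp only [Matrix.cons_val_zero, Matrix.cons_val_one, Matrix.head_cons, star_one, one_mul]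
      rw [← hz, hzw]
      exact Complex.zero_le_real.mpr habsz
    · show 0 ≤ star (d 1) * C 1 0 * d 0
      rw [hd]
      simp only [Matrix.cons_val_zero, Matrix.cons_val_one, Matrix.head_cons, mul_one]
      rw [hC10, show star w * star z = star (z * w) by
        simp only [Complex.star_def, ← _root_.map_mul]; ring_nf, hzw]
      rw [Complex.star_def, Complex.conj_ofReal]
      exact Complex.zero_le_real.mpr habsz
    · show 0 ≤ star (d 1) * C 1 1 * d 1
      rw [hscal]
      exact psd_diag_nonneg hCpsd 1
end
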